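/- arXiv:2208.03892 — 6 statements merged into one kernel-verified Lean document; each statement's English description precedes it below -/
import Mathlib

section
/- Let \varphi be an analytic self-map of the unit disk with \varphi \in S^p. Then D_\varphi : S^p \to S^p is bounded if and only if C_\varphi : H^p \to S^p is bounded, and each is equivalent to the boundedness of the operator f \mapsto (f\circ\varphi)' from H^p to H^p. -/
/-!
A primitive `F` of `g ∈ H^p` normalised by `F 0 = 0` has `‖F‖_{S^p} = ‖g‖_{H^p}` and
`D_φ F = C_φ g`, while `D_φ f = C_φ f'` and `‖f'‖_{H^p} ≤ ‖f‖_{S^p}`; so `D_φ` and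
`C_φ : H^p → S^p` are bounded together. Since `‖g ∘ φ‖_{S^p} = |g (φ 0)| + ‖(g ∘ φ)'‖_{H^p}`,
the second equivalence reduces to boundedness of point evaluation on `H^p`. Cauchy's formula on
the circle of radius `r = (1 + |w|) / 2` bounds `|g w|` by `A = r / (r - |w|)` times the mean
of `|g|` there, the pointwise inequality `t x ≤ 1 + (t x)^p` turns this into
`t |g w| ≤ A (1 + t^p ‖g‖_{H^p}^p)`, and the choice `t = ‖g‖_{H^p}⁻¹` gives `|g w| ≤ 2 A ‖g‖_{H^p}`.
-/

open Metric Complex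

/-- The `p`-th power mean of `|g|^p` on the circle of radius `r`. -/
noncomputable def hpInt (p : ℝ) (g : ℂ → ℂ) (r : ℝ) : ℝ :=
  ∫ θ in (0 : ℝ)..(2 * Real.pi), ‖g (r * Complex.exp (θ * Complex.I))‖ ^ p / (2 * Real.pi)

/-- Membership in the Hardy space `H^p`. -/
def MemHp (p : ℝ) (g : ℂ → ℂ) : Prop :=
  DifferentiableOn ℂ g (ball 0 1) ∧ BddAbove (hpInt p g '' Set.Ioo (0 : ℝ) 1)

/-- The `H^p` norm. -/
noncomputable def hpNorm (p : ℝ) (g : ℂ → ℂ) : ℝ :=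
  (sSup (hpInt p g '' Set.Ioo (0 : ℝ) 1)) ^ (1 / p)

/-- Membership in `S^p`: `f` analytic on the disk with `f' ∈ H^p`. -/
def MemSp (p : ℝ) (f : ℂ → ℂ) : Prop :=
  DifferentiableOn ℂ f (ball 0 1) ∧ MemHp p (deriv f)

/-- The `S^p` norm `‖f‖ = |f(0)| + ‖f'‖_{H^p}`. -/
noncomputable def spNorm (p : ℝ) (f : ℂ → ℂ) : ℝ :=
  ‖f 0‖ + hpNorm p (deriv f)

/-- Boundedness of an operator between two such spaces of functions. -/
def BddOp (memX : (ℂ → ℂ) → Prop) (nX : (ℂ → ℂ) → ℝ)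
    (memY : (ℂ → ℂ) → Prop) (nY : (ℂ → ℂ) → ℝ) (T : (ℂ → ℂ) → (ℂ → ℂ)) : Prop :=
  (∀ f, memX f → memY (T f)) ∧ ∃ C : ℝ, ∀ f, memX f → nY (T f) ≤ C * nX f

open Real

lemma two_pi_mul_norm_le_mul_integral_norm_circleMap {g : ℂ → ℂ} {w : ℂ} {r : ℝ}
    (hg : DifferentiableOn ℂ g (closedBall 0 r)) (hw : ‖w‖ < r) :
    2 * π * ‖g w‖ ≤ r / (r - ‖w‖) * ∫ θ in 0..2 * π, ‖g (circleMap 0 r θ)‖ := by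
  have hr : 0 < r := (norm_nonneg w).trans_lt hw
  have hgc : Continuous fun θ => g (circleMap 0 r θ) :=
    hg.continuousOn.comp_continuous (continuous_circleMap 0 r)
      (circleMap_mem_closedBall 0 hr.le)
  have hcauchy := hg.circleIntegral_sub_inv_smul (mem_ball_zero_iff.mpr hw)
  have hlhs : ‖(2 * π * I : ℂ) • g w‖ = 2 * π * ‖g w‖ := by
    simp [pi_pos.le]
  rw [← hlhs, ← hcauchy, circleIntegral, ← intervalIntegral.integral_const_mul]
  refine intervalIntegral.norm_integral_le_of_norm_le two_pi_pos.le
    (Filter.Eventually.of_forall fun θ _ => ?_)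
    ((continuous_const.mul hgc.norm).intervalIntegrable _ _)
  have hdist : r - ‖w‖ ≤ ‖circleMap 0 r θ - w‖ := by
    simpa [norm_circleMap_zero, abs_of_pos hr] using norm_sub_norm_le (circleMap 0 r θ) w
  rw [norm_smul, norm_smul, norm_inv, deriv_circleMap, norm_mul, norm_I, mul_one,
    norm_circleMap_zero, abs_of_pos hr, ← mul_assoc, div_eq_mul_inv]
  gcongr

lemma le_one_add_rpow {x p : ℝ} (hx : 0 ≤ x) (hp : 1 ≤ p) : x ≤ 1 + x ^ p := by
  rcases le_or_gt x 1 with h | h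
  · linarith [Real.rpow_nonneg hx p]
  · linarith [Real.self_le_rpow_of_one_le h.le hp]

lemma mul_integral_le_sub_add_rpow_mul_integral_rpow {u : ℝ → ℝ} (hu : Continuous u)
    (hu0 : ∀ θ, 0 ≤ u θ) {a b p t : ℝ} (hab : a ≤ b) (hp : 1 ≤ p) (ht : 0 ≤ t) :
    t * ∫ θ in a..b, u θ ≤ (b - a) + t ^ p * ∫ θ in a..b, u θ ^ p := by
  have hup : Continuous fun θ => u θ ^ p := hu.rpow_const fun _ => Or.inr (by linarith)
  have hrhs : (b - a) + t ^ p * ∫ θ in a..b, u θ ^ p = ∫ θ in a..b, (1 + t ^ p * u θ ^ p) := by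
    have hint : IntervalIntegrable (fun θ => t ^ p * u θ ^ p) MeasureTheory.volume a b :=
      (continuous_const.mul hup).intervalIntegrable _ _
    rw [intervalIntegral.integral_add intervalIntegrable_const hint,
      intervalIntegral.integral_const_mul]
    simp
  rw [hrhs, ← intervalIntegral.integral_const_mul]
  refine intervalIntegral.integral_mono_on hab ((continuous_const.mul hu).intervalIntegrable _ _)
    ((continuous_const.add (continuous_const.mul hup)).intervalIntegrable _ _) fun θ _ => ?_
  rw [← Real.mul_rpow ht (hu0 θ)]
  exact le_one_add_rpow (mul_nonneg ht (hu0 θ)) hp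

lemma le_two_mul_mul_rpow_of_forall_mul_le {a A M p : ℝ} (hA : 0 ≤ A) (hM : 0 ≤ M) (hp : 0 < p)
    (h : ∀ t > 0, t * a ≤ A * (1 + t ^ p * M)) : a ≤ 2 * A * M ^ (1 / p) := by
  rcases hM.eq_or_lt with rfl | hM
  · rw [Real.zero_rpow (one_div_pos.mpr hp).ne', mul_zero]
    by_contra! ha
    have := h ((A + 1) / a) (by positivity)
    rw [div_mul_cancel₀ _ ha.ne'] at this
    linarith
  · have ht : 0 < M ^ (-(1 / p)) := Real.rpow_pos_of_pos hM _
    have htp : (M ^ (-(1 / p))) ^ p = M⁻¹ := by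
      rw [← Real.rpow_mul hM.le, show -(1 / p) * p = -1 by field_simp, Real.rpow_neg_one]
    have := h _ ht
    rw [htp, inv_mul_cancel₀ hM.ne', Real.rpow_neg hM.le, ← div_eq_inv_mul,
      div_le_iff₀ (Real.rpow_pos_of_pos hM _)] at this
    linarith

lemma hpInt_nonneg (p : ℝ) (g : ℂ → ℂ) (r : ℝ) : 0 ≤ hpInt p g r :=
  intervalIntegral.integral_nonneg two_pi_pos.le fun _ _ =>
    div_nonneg (Real.rpow_nonneg (norm_nonneg _) p) two_pi_pos.le

lemma hpInt_eq_integral_circleMap (p : ℝ) (g : ℂ → ℂ) (r : ℝ) :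
    hpInt p g r = (∫ θ in 0..2 * π, ‖g (circleMap 0 r θ)‖ ^ p) / (2 * π) := by
  simp only [hpInt, circleMap_zero, intervalIntegral.integral_div]

lemma hpInt_le_sSup {p : ℝ} {g : ℂ → ℂ} (hg : MemHp p g) {r : ℝ} (hr : r ∈ Set.Ioo (0 : ℝ) 1) :
    hpInt p g r ≤ sSup (hpInt p g '' Set.Ioo 0 1) :=
  le_csSup hg.2 (Set.mem_image_of_mem _ hr)

lemma sSup_hpInt_nonneg (p : ℝ) (g : ℂ → ℂ) : 0 ≤ sSup (hpInt p g '' Set.Ioo 0 1) :=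
  Real.sSup_nonneg (by rintro _ ⟨r, -, rfl⟩; exact hpInt_nonneg p g r)

lemma hpNorm_nonneg (p : ℝ) (g : ℂ → ℂ) : 0 ≤ hpNorm p g :=
  Real.rpow_nonneg (sSup_hpInt_nonneg p g) _

lemma norm_le_mul_hpNorm {p : ℝ} (hp : 1 ≤ p) {g : ℂ → ℂ} (hg : MemHp p g) {w : ℂ}
    (hw : w ∈ ball (0 : ℂ) 1) : ‖g w‖ ≤ 2 * ((1 + ‖w‖) / (1 - ‖w‖)) * hpNorm p g := by
  rw [mem_ball_zero_iff] at hw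
  set r := (1 + ‖w‖) / 2 with hr_def
  have hwr : ‖w‖ < r := by rw [hr_def]; linarith
  have hr : r ∈ Set.Ioo (0 : ℝ) 1 := ⟨(norm_nonneg w).trans_lt hwr, by rw [hr_def]; linarith⟩
  have hA : r / (r - ‖w‖) = (1 + ‖w‖) / (1 - ‖w‖) := by
    rw [show r - ‖w‖ = (1 - ‖w‖) / 2 by ring, div_div_div_cancel_right₀ two_ne_zero]
  set A := (1 + ‖w‖) / (1 - ‖w‖)
  have hA0 : 0 ≤ A := div_nonneg (by positivity) (by linarith)
  set M := sSup (hpInt p g '' Set.Ioo 0 1)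
  set u : ℝ → ℝ := fun θ => ‖g (circleMap 0 r θ)‖
  have hu : Continuous u := (hg.1.continuousOn.comp_continuous (continuous_circleMap 0 r)
    fun θ => by simpa [norm_circleMap_zero, abs_of_pos hr.1] using hr.2).norm
  have hcauchy : 2 * π * ‖g w‖ ≤ A * ∫ θ in 0..2 * π, u θ := by
    rw [← hA]
    exact two_pi_mul_norm_le_mul_integral_norm_circleMap
      (hg.1.mono (closedBall_subset_ball hr.2)) hwr
  have hint : ∫ θ in 0..2 * π, u θ ^ p = 2 * π * hpInt p g r := by
    rw [hpInt_eq_integral_circleMap, mul_div_cancel₀ _ two_pi_pos.ne']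
  refine le_two_mul_mul_rpow_of_forall_mul_le hA0 (sSup_hpInt_nonneg p g) (by linarith)
    fun t ht => le_of_mul_le_mul_left ?_ two_pi_pos
  calc 2 * π * (t * ‖g w‖) = t * (2 * π * ‖g w‖) := by ring
    _ ≤ t * (A * ∫ θ in 0..2 * π, u θ) := by gcongr
    _ = A * (t * ∫ θ in 0..2 * π, u θ) := by ring
    _ ≤ A * (2 * π + t ^ p * ∫ θ in 0..2 * π, u θ ^ p) := by
        gcongr
        simpa using mul_integral_le_sub_add_rpow_mul_integral_rpow hu (fun _ => norm_nonneg _)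
          two_pi_pos.le hp ht.le
    _ ≤ A * (2 * π + t ^ p * (2 * π * M)) := by
        rw [hint]
        gcongr
        exact hpInt_le_sSup hg hr
    _ = 2 * π * (A * (1 + t ^ p * M)) := by ring

section Congr

variable {p : ℝ} {f g : ℂ → ℂ}

lemma hpInt_congr (h : Set.EqOn f g (ball 0 1)) :
    Set.EqOn (hpInt p f) (hpInt p g) (Set.Ioo 0 1) := fun r hr => by
  simp only [hpInt_eq_integral_circleMap]
  congr 2 with θ
  rw [h (by simpa [norm_circleMap_zero, abs_of_pos hr.1] using hr.2)]

lemma hpNorm_congr (h : Set.EqOn f g (ball 0 1)) : hpNorm p f = hpNorm p g := by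
  rw [hpNorm, hpNorm, Set.image_congr (hpInt_congr h)]

lemma memHp_congr (h : Set.EqOn f g (ball 0 1)) : MemHp p f ↔ MemHp p g := by
  rw [MemHp, MemHp, Set.image_congr (hpInt_congr h)]
  exact and_congr_left' ⟨fun hf => hf.congr h.symm, fun hg => hg.congr h⟩

lemma spNorm_congr (h : Set.EqOn f g (ball 0 1)) : spNorm p f = spNorm p g := by
  rw [spNorm, spNorm, h (mem_ball_self one_pos), hpNorm_congr (h.deriv isOpen_ball)]

lemma memSp_congr (h : Set.EqOn f g (ball 0 1)) : MemSp p f ↔ MemSp p g := by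
  rw [MemSp, MemSp, memHp_congr (h.deriv isOpen_ball)]
  exact and_congr_left' ⟨fun hf => hf.congr h.symm, fun hg => hg.congr h⟩

end Congr

lemma hpNorm_deriv_le_spNorm (p : ℝ) (f : ℂ → ℂ) : hpNorm p (deriv f) ≤ spNorm p f :=
  le_add_of_nonneg_left (norm_nonneg _)

lemma BddOp.exists_nonneg_bound {memX memY : (ℂ → ℂ) → Prop} {nX nY : (ℂ → ℂ) → ℝ}
    {T : (ℂ → ℂ) → (ℂ → ℂ)} (h : BddOp memX nX memY nY T) (hnX : ∀ f, 0 ≤ nX f) :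
    ∃ C, 0 ≤ C ∧ ∀ f, memX f → nY (T f) ≤ C * nX f := by
  obtain ⟨-, C, hC⟩ := h
  exact ⟨max C 0, le_max_right C 0, fun f hf =>
    (hC f hf).trans (mul_le_mul_of_nonneg_right (le_max_left C 0) (hnX f))⟩

section CompositionOperators

variable {p : ℝ} {φ : ℂ → ℂ}

lemma bddOp_comp_of_bddOp_comp_deriv (hφ : Set.MapsTo φ (ball 0 1) (ball 0 1))
    (h : BddOp (MemSp p) (spNorm p) (MemSp p) (spNorm p) (fun f z => deriv f (φ z))) :
    BddOp (MemHp p) (hpNorm p) (MemSp p) (spNorm p) (· ∘ φ) := by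
  obtain ⟨hmaps, C, hC⟩ := h
  have key : ∀ g, MemHp p g → MemSp p (g ∘ φ) ∧ spNorm p (g ∘ φ) ≤ C * hpNorm p g := by
    intro g hg
    obtain ⟨F, hF0, hF⟩ := hg.1.isExactOn_ball.with_val_at 0 0
    have hF' : Set.EqOn (deriv F) g (ball 0 1) := fun z hz => (hF z hz).deriv
    have hFSp : MemSp p F :=
      ⟨fun z hz => (hF z hz).differentiableAt.differentiableWithinAt, (memHp_congr hF').mpr hg⟩
    have hFnorm : spNorm p F = hpNorm p g := by
      rw [spNorm, hF0, norm_zero, zero_add, hpNorm_congr hF']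
    have hcomp : Set.EqOn (fun z => deriv F (φ z)) (g ∘ φ) (ball 0 1) :=
      fun z hz => hF' (hφ hz)
    exact ⟨(memSp_congr hcomp).mp (hmaps F hFSp),
      (spNorm_congr hcomp).symm.trans_le (hFnorm ▸ hC F hFSp)⟩
  exact ⟨fun g hg => (key g hg).1, C, fun g hg => (key g hg).2⟩

lemma bddOp_comp_deriv_of_bddOp_comp
    (h : BddOp (MemHp p) (hpNorm p) (MemSp p) (spNorm p) (· ∘ φ)) :
    BddOp (MemSp p) (spNorm p) (MemSp p) (spNorm p) (fun f z => deriv f (φ z)) := by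
  obtain ⟨C, hC0, hC⟩ := h.exists_nonneg_bound (hpNorm_nonneg p)
  refine ⟨fun f hf => h.1 (deriv f) hf.2, C, fun f hf => ?_⟩
  calc spNorm p (deriv f ∘ φ) ≤ C * hpNorm p (deriv f) := hC _ hf.2
    _ ≤ C * spNorm p f := by gcongr; exact hpNorm_deriv_le_spNorm p f

lemma bddOp_deriv_comp_of_bddOp_comp
    (h : BddOp (MemHp p) (hpNorm p) (MemSp p) (spNorm p) (· ∘ φ)) :
    BddOp (MemHp p) (hpNorm p) (MemHp p) (hpNorm p) (fun f => deriv (f ∘ φ)) := by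
  obtain ⟨C, -, hC⟩ := h.exists_nonneg_bound (hpNorm_nonneg p)
  exact ⟨fun g hg => (h.1 g hg).2, C, fun g hg => (hpNorm_deriv_le_spNorm p _).trans (hC g hg)⟩

lemma bddOp_comp_of_bddOp_deriv_comp (hp : 1 ≤ p) (hφan : DifferentiableOn ℂ φ (ball 0 1))
    (hφ : Set.MapsTo φ (ball 0 1) (ball 0 1))
    (h : BddOp (MemHp p) (hpNorm p) (MemHp p) (hpNorm p) (fun f => deriv (f ∘ φ))) :
    BddOp (MemHp p) (hpNorm p) (MemSp p) (spNorm p) (· ∘ φ) := by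
  obtain ⟨C, -, hC⟩ := h.exists_nonneg_bound (hpNorm_nonneg p)
  set K := 2 * ((1 + ‖φ 0‖) / (1 - ‖φ 0‖))
  refine ⟨fun g hg => ⟨hg.1.comp hφan hφ, h.1 g hg⟩, K + C, fun g hg => ?_⟩
  calc spNorm p (g ∘ φ) = ‖g (φ 0)‖ + hpNorm p (deriv (g ∘ φ)) := rfl
    _ ≤ K * hpNorm p g + C * hpNorm p g :=
        add_le_add (norm_le_mul_hpNorm hp hg (hφ (mem_ball_self one_pos))) (hC g hg)
    _ = (K + C) * hpNorm p g := by ring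

end CompositionOperators

theorem stmt3_general (p : ℝ) (hp : 1 < p) (φ : ℂ → ℂ)
    (hφan : DifferentiableOn ℂ φ (ball 0 1))
    (hφmap : Set.MapsTo φ (ball 0 1) (ball 0 1)) :
    (BddOp (MemSp p) (spNorm p) (MemSp p) (spNorm p) (fun f => fun z => deriv f (φ z)) ↔
      BddOp (MemHp p) (hpNorm p) (MemSp p) (spNorm p) (fun f => f ∘ φ)) ∧
    (BddOp (MemSp p) (spNorm p) (MemSp p) (spNorm p) (fun f => fun z => deriv f (φ z)) ↔
      BddOp (MemHp p) (hpNorm p) (MemHp p) (hpNorm p) (fun f => deriv (f ∘ φ))) := by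
  have hD_C := bddOp_comp_of_bddOp_comp_deriv (p := p) hφmap
  exact ⟨⟨hD_C, bddOp_comp_deriv_of_bddOp_comp⟩,
    ⟨bddOp_deriv_comp_of_bddOp_comp ∘ hD_C,
      bddOp_comp_deriv_of_bddOp_comp ∘ bddOp_comp_of_bddOp_deriv_comp hp.le hφan hφmap⟩⟩

/-- For an analytic self-map `φ` of the disk with `φ ∈ S^p`: `D_φ : S^p → S^p` is bounded
iff `C_φ : H^p → S^p` is bounded, and each is equivalent to boundedness of
`f ↦ (f ∘ φ)'` from `H^p` to `H^p`. -/
theorem stmt3 (p : ℝ) (hp : 1 < p) (φ : ℂ → ℂ)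
    (hφan : DifferentiableOn ℂ φ (ball 0 1))
    (hφmap : Set.MapsTo φ (ball 0 1) (ball 0 1))
    (hφSp : MemSp p φ) :
    (BddOp (MemSp p) (spNorm p) (MemSp p) (spNorm p) (fun f => fun z => deriv f (φ z)) ↔
      BddOp (MemHp p) (hpNorm p) (MemSp p) (spNorm p) (fun f => f ∘ φ)) ∧
    (BddOp (MemSp p) (spNorm p) (MemSp p) (spNorm p) (fun f => fun z => deriv f (φ z)) ↔
      BddOp (MemHp p) (hpNorm p) (MemHp p) (hpNorm p) (fun f => deriv (f ∘ φ))) :=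
  stmt3_general p hp φ hφan hφmap
end

section
/- Let \varphi(z) = a z^M with 0 < |a| < 1 and M \geq 3 an integer, and suppose \lambda is a nonzero complex number and f is analytic on the unit disk with f'(\varphi(z)) = \lambda f(z) for all z in the disk. Then f = 0. Consequently D_\varphi on S^p has no nonzero eigenvalues when M \geq 3. -/
/-!
Near `0`, `f - f 0` is `c⁻¹ • (f' - f' 0) ∘ φ` with `φ z = a z ^ M`, so its order of vanishing
at `0` is `M` times that of `f' - f' 0`, which is at least one. On the other hand it exceeds the
order of `f'` by exactly one. Hence `f'` vanishes at `0`, and its order `p` satisfies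
`p + 1 = M p`, which for `M ≥ 3` forces `p = ∞`. Thus `f` vanishes near `0`, hence on the disk.
-/

open Metric Filter Topology

theorem ENat.eq_top_of_add_one_eq_mul {p : ℕ∞} {M : ℕ} (hM : 3 ≤ M) (h : p + 1 = p * M) :
    p = ⊤ := by
  induction p using ENat.recTopCoe with
  | top => rfl
  | coe p =>
    norm_cast at h
    rcases p with _ | p
    · simp at h
    · nlinarith

variable {𝕜 E : Type*} [NontriviallyNormedField 𝕜] [NormedAddCommGroup E] [NormedSpace 𝕜 E]

theorem AnalyticAt.analyticOrderAt_const_smul {f : 𝕜 → E} {z₀ : 𝕜} (hf : AnalyticAt 𝕜 f z₀)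
    {c : 𝕜} (hc : c ≠ 0) :
    analyticOrderAt (fun z ↦ c • f z) z₀ = analyticOrderAt f z₀ := by
  have := analyticOrderAt_smul (analyticAt_const (v := c)) hf
  rwa [(analyticOrderAt_eq_zero (f := fun _ : 𝕜 ↦ c)).mpr (.inr hc), zero_add] at this

theorem analyticOrderAt_const_mul_pow {a : 𝕜} (ha : a ≠ 0) (M : ℕ) :
    analyticOrderAt (fun z ↦ a * z ^ M) 0 = M := by
  rw [AnalyticAt.analyticOrderAt_eq_natCast (by fun_prop)]
  exact ⟨fun _ ↦ a, analyticAt_const, ha, .of_forall fun z ↦ by simp [mul_comm]⟩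

theorem AnalyticAt.analyticOrderAt_comp_const_mul_pow {F : 𝕜 → E} (hF : AnalyticAt 𝕜 F 0)
    {a : 𝕜} (ha : a ≠ 0) {M : ℕ} (hM : M ≠ 0) :
    analyticOrderAt (fun z ↦ F (a * z ^ M)) 0 = analyticOrderAt F 0 * M := by
  have h0 : a * (0 : 𝕜) ^ M = 0 := by simp [hM]
  have := (h0 ▸ hF).analyticOrderAt_comp (g := fun z ↦ a * z ^ M) (by fun_prop)
  simpa [Function.comp_def, h0, analyticOrderAt_const_mul_pow ha] using this

section DerivCompConstMulPow

variable [CompleteSpace E] {f : 𝕜 → E} {a c : 𝕜} {M : ℕ}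

theorem analyticOrderAt_sub_eq_mul_of_deriv_comp_const_mul_pow (hf : AnalyticAt 𝕜 f 0)
    (ha : a ≠ 0) (hM : M ≠ 0) (hc : c ≠ 0)
    (heig : ∀ᶠ z in 𝓝 0, deriv f (a * z ^ M) = c • f z) :
    analyticOrderAt (f · - f 0) 0 = analyticOrderAt (deriv f · - deriv f 0) 0 * M := by
  have h0 : deriv f 0 = c • f 0 := by simpa [hM] using heig.self_of_nhds
  have hsub : (fun z ↦ c • (f z - f 0)) =ᶠ[𝓝 0] fun z ↦ deriv f (a * z ^ M) - deriv f 0 := by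
    filter_upwards [heig] with z hz
    rw [hz, h0, smul_sub]
  rw [← (hf.fun_sub analyticAt_const).analyticOrderAt_const_smul hc, analyticOrderAt_congr hsub,
    (hf.deriv.fun_sub analyticAt_const).analyticOrderAt_comp_const_mul_pow ha hM]

theorem eventuallyEq_zero_of_deriv_comp_const_mul_pow [CharZero 𝕜] (hf : AnalyticAt 𝕜 f 0)
    (ha : a ≠ 0) (hM : 3 ≤ M) (hc : c ≠ 0)
    (heig : ∀ᶠ z in 𝓝 0, deriv f (a * z ^ M) = c • f z) :
    f =ᶠ[𝓝 0] 0 := by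
  have hord := analyticOrderAt_sub_eq_mul_of_deriv_comp_const_mul_pow hf ha (by omega) hc heig
  rw [← hf.analyticOrderAt_deriv_add_one] at hord
  have hq : 1 ≤ analyticOrderAt (deriv f · - deriv f 0) 0 := by
    rw [Order.one_le_iff_ne_zero, AnalyticAt.analyticOrderAt_ne_zero (by fun_prop)]
    exact sub_self _
  have hp : analyticOrderAt (deriv f) 0 ≠ 0 := by
    intro hp
    rw [hp, zero_add] at hord
    have : ((1 * M : ℕ) : ℕ∞) ≤ 1 := hord ▸ mul_le_mul_left hq M
    norm_cast at this
    omega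
  have hf'0 : deriv f 0 = 0 := apply_eq_zero_of_analyticOrderAt_ne_zero hp
  simp only [hf'0, sub_zero] at hord
  have htop := ENat.eq_top_of_add_one_eq_mul hM hord
  refine analyticOrderAt_eq_top.mp ?_
  rw [← hf.analyticOrderAt_const_smul hc, ← analyticOrderAt_congr heig,
    hf.deriv.analyticOrderAt_comp_const_mul_pow ha (by omega), htop, ENat.top_mul (by simp; omega)]

end DerivCompConstMulPow

theorem stmt5_general (a : ℂ) (ha0 : a ≠ 0) (M : ℕ) (hM : 3 ≤ M)
    (lam : ℂ) (hlam : lam ≠ 0) (f : ℂ → ℂ)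
    (hf : DifferentiableOn ℂ f (ball 0 1))
    (heig : ∀ z ∈ ball (0 : ℂ) 1, deriv f (a * z ^ M) = lam * f z) :
    ∀ z ∈ ball (0 : ℂ) 1, f z = 0 := by
  have hfa : AnalyticOnNhd ℂ f (ball 0 1) := hf.analyticOnNhd isOpen_ball
  have h0 : (0 : ℂ) ∈ ball (0 : ℂ) 1 := mem_ball_self one_pos
  have hloc : f =ᶠ[𝓝 0] 0 := eventuallyEq_zero_of_deriv_comp_const_mul_pow (hfa 0 h0) ha0 hM hlam
    (eventually_of_mem (isOpen_ball.mem_nhds h0) heig)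
  exact fun z hz ↦
    hfa.eqOn_zero_of_preconnected_of_eventuallyEq_zero (convex_ball 0 1).isPreconnected h0 hloc hz

/-- For `φ(z) = a z^M` with `0 < |a| < 1` and `M ≥ 3`, if `λ ≠ 0` and `f` is analytic on
the unit disk with `f'(φ(z)) = λ f(z)` on the disk, then `f = 0`; i.e. `D_φ` has no
nonzero eigenvalues when `M ≥ 3`. -/
theorem stmt5 (a : ℂ) (ha0 : a ≠ 0) (ha : ‖a‖ < 1) (M : ℕ) (hM : 3 ≤ M)
    (lam : ℂ) (hlam : lam ≠ 0) (f : ℂ → ℂ)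
    (hf : DifferentiableOn ℂ f (ball 0 1))
    (heig : ∀ z ∈ ball (0 : ℂ) 1, deriv f (a * z ^ M) = lam * f z) :
    ∀ z ∈ ball (0 : ℂ) 1, f z = 0 :=
  stmt5_general a ha0 M hM lam hlam f hf heig
end

section
/- Let \varphi(z) = a z^2 with 0 < |a| < 1. If \lambda is a nonzero eigenvalue of the operator f \mapsto f' \circ \varphi acting on analytic functions on the unit disk (i.e., there exists nonzero analytic f with f'(\varphi(z)) = \lambda f(z) for all z), then \lambda = 2a. -/
/-! With `c n` the Taylor coefficients of `f` at `0`, expanding `f'(a z²) = ∑ (n+1) aⁿ c (n+1) z²ⁿ`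
and comparing coefficients with `λ f` gives `λ c (2n+1) = 0` and `λ c (2n) = (n+1) aⁿ c (n+1)`.
Since `n + 1 < 2n` for `n ≥ 2`, the vanishing of `c 2` would make every coefficient vanish, hence
`f = 0` on the disk. So `c 2 ≠ 0`, and the case `n = 1`, `λ c 2 = 2 a c 2`, gives `λ = 2a`. -/

open Metric Nat Filter Topology

section PowerSeriesUniqueness

variable {𝕜 E : Type*} [NontriviallyNormedField 𝕜] [NormedAddCommGroup E] [NormedSpace 𝕜 E]

theorem eq_of_hasSum_pow_smul {c c' : ℕ → E} {g : 𝕜 → E}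
    (h : ∀ᶠ z in 𝓝 0, HasSum (fun n => z ^ n • c n) (g z))
    (h' : ∀ᶠ z in 𝓝 0, HasSum (fun n => z ^ n • c' n) (g z)) : c = c' := by
  let series (b : ℕ → E) : FormalMultilinearSeries 𝕜 𝕜 E :=
    fun n => ContinuousMultilinearMap.mkPiRing 𝕜 (Fin n) (b n)
  have coeff_series (b : ℕ → E) (n : ℕ) : (series b).coeff n = b n := by
    simp [series, FormalMultilinearSeries.coeff]
  have hasFPowerSeriesAt_series {b : ℕ → E}
      (hb : ∀ᶠ z in 𝓝 0, HasSum (fun n => z ^ n • b n) (g z)) :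
      HasFPowerSeriesAt g (series b) 0 := by
    simpa only [hasFPowerSeriesAt_iff, coeff_series, zero_add] using hb
  funext n
  rw [← coeff_series c, ← coeff_series c',
    (hasFPowerSeriesAt_series h).eq_formalMultilinearSeries (hasFPowerSeriesAt_series h')]

end PowerSeriesUniqueness

theorem HasSum.subst_mul_sq {b : ℕ → ℂ} {a z s : ℂ} (h : HasSum (fun n => b n * (a * z ^ 2) ^ n) s) :
    HasSum (fun m => (if Even m then a ^ (m / 2) * b (m / 2) else 0) * z ^ m) s := by
  rw [← add_zero s]
  refine HasSum.even_add_odd ?_ ?_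
  · convert h using 2 with n
    simp only [even_two_mul, if_true, Nat.mul_div_cancel_left n two_pos]
    ring
  · simp

noncomputable def taylorCoeff (f : ℂ → ℂ) (n : ℕ) : ℂ := (n ! : ℂ)⁻¹ * iteratedDeriv n f 0

theorem hasSum_taylorCoeff {f : ℂ → ℂ} {r : ℝ} (hf : DifferentiableOn ℂ f (ball 0 r)) {z : ℂ}
    (hz : z ∈ ball 0 r) : HasSum (fun n => taylorCoeff f n * z ^ n) (f z) := by
  simpa only [taylorCoeff, sub_zero, smul_eq_mul, mul_comm, mul_left_comm]
    using Complex.hasSum_taylorSeries_on_ball hf hz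

theorem taylorCoeff_deriv (f : ℂ → ℂ) (n : ℕ) :
    taylorCoeff (deriv f) n = (n + 1) * taylorCoeff f (n + 1) := by
  rw [taylorCoeff, taylorCoeff, iteratedDeriv_succ', Nat.factorial_succ, Nat.cast_mul, Nat.cast_succ]
  field_simp

theorem eq_zero_of_even_odd_recurrence {c : ℕ → ℂ} {lam a : ℂ} (hlam : lam ≠ 0)
    (hodd : ∀ n, lam * c (2 * n + 1) = 0)
    (heven : ∀ n, lam * c (2 * n) = (n + 1) * a ^ n * c (n + 1)) (hc2 : c 2 = 0) (n : ℕ) :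
    c n = 0 := by
  induction n using Nat.strong_induction_on with
  | _ n ih =>
    obtain ⟨k, rfl | rfl⟩ := Nat.even_or_odd' n
    · rcases (by omega : k = 0 ∨ k = 1 ∨ 2 ≤ k) with rfl | rfl | hk
      · have hc1 : c 1 = 0 := by simpa [hlam] using hodd 0
        simpa [hc1, hlam] using heven 0
      · exact hc2
      · simpa [hlam, ih (k + 1) (by omega)] using heven k
    · simpa [hlam] using hodd k

theorem taylorCoeff_recurrence_of_eigenfunction {f : ℂ → ℂ} {a lam : ℂ}
    (hf : DifferentiableOn ℂ f (ball 0 1)) (ha : ‖a‖ < 1)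
    (heig : ∀ z ∈ ball (0 : ℂ) 1, deriv f (a * z ^ 2) = lam * f z) :
    (∀ n, lam * taylorCoeff f (2 * n + 1) = 0) ∧
      ∀ n, lam * taylorCoeff f (2 * n) = (n + 1) * a ^ n * taylorCoeff f (n + 1) := by
  have hmaps : Set.MapsTo (fun z => a * z ^ 2) (ball 0 1) (ball 0 1) := fun z hz => by
    rw [mem_ball_zero_iff] at hz ⊢
    rw [norm_mul, norm_pow]
    exact mul_lt_one_of_nonneg_of_lt_one_left (norm_nonneg a) ha
      (pow_le_one₀ (norm_nonneg z) hz.le)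
  have hcoeff : (fun m => if Even m then a ^ (m / 2) * taylorCoeff (deriv f) (m / 2) else 0) =
      fun m => lam * taylorCoeff f m := by
    refine eq_of_hasSum_pow_smul (g := fun z => lam * f z) ?_ ?_ <;>
      filter_upwards [ball_mem_nhds (0 : ℂ) one_pos] with z hz <;>
      simp only [smul_eq_mul, mul_comm (z ^ _)]
    · rw [← heig z hz]
      exact (hasSum_taylorCoeff (hf.deriv isOpen_ball) (hmaps hz)).subst_mul_sq
    · simpa only [mul_assoc] using (hasSum_taylorCoeff hf hz).mul_left lam
  refine ⟨fun n => ?_, fun n => ?_⟩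
  · simpa using (congrFun hcoeff (2 * n + 1)).symm
  · simpa [taylorCoeff_deriv, mul_assoc, mul_left_comm] using (congrFun hcoeff (2 * n)).symm

theorem stmt6_general (a : ℂ) (ha : ‖a‖ < 1) (lam : ℂ) (hlam : lam ≠ 0)
    (f : ℂ → ℂ) (hf : DifferentiableOn ℂ f (ball 0 1))
    (hfne : ∃ z ∈ ball (0 : ℂ) 1, f z ≠ 0)
    (heig : ∀ z ∈ ball (0 : ℂ) 1, deriv f (a * z ^ 2) = lam * f z) :
    lam = 2 * a := by
  obtain ⟨hodd, heven⟩ := taylorCoeff_recurrence_of_eigenfunction hf ha heig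
  have hc2 : taylorCoeff f 2 ≠ 0 := by
    intro hc2
    obtain ⟨z, hz, hfz⟩ := hfne
    have hzero := eq_zero_of_even_odd_recurrence hlam hodd heven hc2
    exact hfz ((hasSum_taylorCoeff hf hz).unique (by simp [hzero]))
  have h2 : lam * taylorCoeff f 2 = 2 * a * taylorCoeff f 2 := by
    simpa [one_add_one_eq_two] using heven 1
  exact mul_right_cancel₀ hc2 h2

/-- For `φ(z) = a z²` with `0 < |a| < 1`: any nonzero eigenvalue of `f ↦ f' ∘ φ` on
analytic functions on the unit disk equals `2a`. -/
theorem stmt6 (a : ℂ) (ha0 : a ≠ 0) (ha : ‖a‖ < 1) (lam : ℂ) (hlam : lam ≠ 0)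
    (f : ℂ → ℂ) (hf : DifferentiableOn ℂ f (ball 0 1))
    (hfne : ∃ z ∈ ball (0 : ℂ) 1, f z ≠ 0)
    (heig : ∀ z ∈ ball (0 : ℂ) 1, deriv f (a * z ^ 2) = lam * f z) :
    lam = 2 * a :=
  stmt6_general a ha lam hlam f hf hfne heig
end

section
/- Fix 0 < t < 1 (t = |a|) and let \nu = \lfloor (2-t)/(1-t) \rfloor. Then \sup_{n \geq 2} (n-1) t^{n-1} = (\nu - 1) t^{\nu - 1}, i.e., the supremum over integers n \geq 2 of (n-1)t^{n-1} is attained at n = \nu. -/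
noncomputable def Fq (t : ℝ) (n : ℕ) : ℝ := ((n : ℝ) - 1) * t ^ (n - 1)

lemma Fq_step_up (t : ℝ) (h0 : 0 ≤ t) (n : ℕ) (h2 : 1 ≤ n)
    (h : (n : ℝ) * (1 - t) ≤ 1) : Fq t n ≤ Fq t (n + 1) := by
  unfold Fq
  rw [Nat.add_sub_cancel]
  have hn : t ^ n = t ^ (n - 1) * t := by
    rw [← pow_succ]; congr 1; omega
  have : ((n : ℝ) + 1 - 1) = (n : ℝ) := by ring
  push_cast
  rw [this, hn]
  calc ((n : ℝ) - 1) * t ^ (n - 1) ≤ ((n : ℝ) * t) * t ^ (n - 1) :=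
        mul_le_mul_of_nonneg_right (by nlinarith) (pow_nonneg h0 _)
    _ = (n : ℝ) * (t ^ (n - 1) * t) := by ring

lemma Fq_step_down (t : ℝ) (h0 : 0 ≤ t) (n : ℕ) (h2 : 1 ≤ n)
    (h : 1 ≤ (n : ℝ) * (1 - t)) : Fq t (n + 1) ≤ Fq t n := by
  unfold Fq
  rw [Nat.add_sub_cancel]
  have hn : t ^ n = t ^ (n - 1) * t := by
    rw [← pow_succ]; congr 1; omega
  have he : ((n : ℝ) + 1 - 1) = (n : ℝ) := by ring
  push_cast
  rw [he, hn]
  calc (n : ℝ) * (t ^ (n - 1) * t) = ((n : ℝ) * t) * t ^ (n - 1) := by ring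
    _ ≤ ((n : ℝ) - 1) * t ^ (n - 1) :=
        mul_le_mul_of_nonneg_right (by nlinarith) (pow_nonneg h0 _)

/-- For `0 < t < 1` and `ν = ⌊(2-t)/(1-t)⌋`, the supremum over integers `n ≥ 2` of
`(n-1) t^{n-1}` is attained at `n = ν`, with value `(ν-1) t^{ν-1}`. -/
theorem stmt8 (t : ℝ) (h0 : 0 < t) (h1 : t < 1) (ν : ℕ)
    (hν : ν = ⌊(2 - t) / (1 - t)⌋₊) :
    2 ≤ ν ∧ ∀ n : ℕ, 2 ≤ n → ((n : ℝ) - 1) * t ^ (n - 1) ≤ ((ν : ℝ) - 1) * t ^ (ν - 1) := by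
  have h1t : 0 < 1 - t := by linarith
  have hr : 0 ≤ (2 - t) / (1 - t) := div_nonneg (by linarith) h1t.le
  have hfl : (ν : ℝ) ≤ (2 - t) / (1 - t) := by rw [hν]; exact Nat.floor_le hr
  have hfu : (2 - t) / (1 - t) < (ν : ℝ) + 1 := by
    rw [hν]; exact Nat.lt_floor_add_one _
  have key1 : (ν : ℝ) * (1 - t) ≤ 2 - t := (le_div_iff₀ h1t).mp hfl
  have key2 : 2 - t < ((ν : ℝ) + 1) * (1 - t) := (div_lt_iff₀ h1t).mp hfu
  have hνgt : 1 < (ν : ℝ) * (1 - t) := by nlinarith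
  have h2ν : 2 ≤ ν := by
    by_contra h
    push_neg at h
    have : (ν : ℝ) ≤ 1 := by exact_mod_cast Nat.lt_succ_iff.mp h
    nlinarith
  refine ⟨h2ν, ?_⟩
  -- upward part: n ≤ ν
  have up : ∀ k n : ℕ, 2 ≤ n → n + k = ν → Fq t n ≤ Fq t ν := by
    intro k
    induction k with
    | zero => intro n _ hnk; rw [← hnk, Nat.add_zero]
    | succ k ih =>
      intro n h2 hnk
      have hstep : Fq t n ≤ Fq t (n + 1) := by
        apply Fq_step_up t h0.le n (by omega)
        have hle : (n : ℝ) ≤ (ν : ℝ) - 1 := by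
          have : n + 1 ≤ ν := by omega
          have := (Nat.cast_le (α := ℝ)).mpr this
          push_cast at this; linarith
        nlinarith
      exact hstep.trans (ih (n + 1) (by omega) (by omega))
  have down : ∀ k : ℕ, Fq t (ν + k) ≤ Fq t ν := by
    intro k
    induction k with
    | zero => rw [Nat.add_zero]
    | succ k ih =>
      have hstep : Fq t (ν + k + 1) ≤ Fq t (ν + k) := by
        apply Fq_step_down t h0.le (ν + k) (by omega)
        have hle : (ν : ℝ) ≤ ((ν + k : ℕ) : ℝ) := by exact_mod_cast Nat.le_add_right ν k
        push_cast at hle ⊢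
        nlinarith
      exact hstep.trans ih
  intro n h2n
  have : Fq t n ≤ Fq t ν := by
    rcases le_or_gt n ν with h | h
    · exact up (ν - n) n h2n (by omega)
    · have := down (n - ν)
      rwa [show ν + (n - ν) = n by omega] at this
  simpa [Fq] using this
end

section
/- Let \varphi(z) = a z^M with 0 < |a| < 1 and M a positive integer, and let D_\varphi f = f' \circ \varphi act on S^2 (the weighted Hardy space with weights \beta(0)=1, \beta(n)=n). Then \|D_\varphi\| = \max\{1, M(\nu-1)|a|^{\nu-1}\}, where \nu = \lfloor (2-|a|)/(1-|a|) \rfloor. -/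
/-!
With `e₀ = 1`, `eₙ = zⁿ / n` the orthonormal basis of `S²`, `D_φ` sends `e_{n+1}` to
`λₙ e_{Mn}`, where `λ₀ = 1` and `λₙ = M n |a|ⁿ` for `n ≥ 1`. The exponents `Mn` are distinct, so
`D_φ` is a weighted shift: `‖D_φ f‖² = ∑ λₙ² |⟨f, e_{n+1}⟩|²`, its norm is `sup λₙ`, and the
supremum is attained at a basis vector. Finally `n ↦ n |a|ⁿ` increases while
`(n + 1)(1 - |a|) ≤ 1` and decreases afterwards, so its maximum is at `n = ν - 1`.
-/

open Metric

/-- `f` has Taylor coefficients `c` on the unit disk. -/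
def HasCoeffs (f : ℂ → ℂ) (c : ℕ → ℂ) : Prop :=
  ∀ z : ℂ, ‖z‖ < 1 → HasSum (fun n : ℕ => c n * z ^ n) (f z)

/-- The square of the `S²` norm, in terms of Taylor coefficients. -/
noncomputable def S2sq (c : ℕ → ℂ) : ℝ :=
  ‖c 0‖ ^ 2 + ∑' n : ℕ, (n : ℝ) ^ 2 * ‖c n‖ ^ 2

open Function FormalMultilinearSeries

lemma HasCoeffs.hasFPowerSeriesOnBall {f : ℂ → ℂ} {c : ℕ → ℂ} (h : HasCoeffs f c) :
    HasFPowerSeriesOnBall f (ofScalars ℂ c) 0 1 where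
  r_le := by
    refine ENNReal.le_of_forall_nnreal_lt fun r hr => le_radius_of_summable_norm _ ?_
    have hr1 : ‖((r : ℝ) : ℂ)‖ < 1 := by simpa using hr
    refine (h _ hr1).summable.norm.congr fun n => ?_
    simp
  r_pos := one_pos
  hasSum {y} hy := by
    rw [mem_eball, edist_zero_right, ← ofReal_norm, ENNReal.ofReal_lt_one] at hy
    simpa [ofScalars_apply_eq, mul_comm] using h y hy

lemma HasCoeffs.unique {f : ℂ → ℂ} {c d : ℕ → ℂ} (hc : HasCoeffs f c) (hd : HasCoeffs f d) :
    c = d :=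
  ofScalars_series_injective ℂ ℂ <|
    hc.hasFPowerSeriesOnBall.hasFPowerSeriesAt.eq_formalMultilinearSeries
      hd.hasFPowerSeriesOnBall.hasFPowerSeriesAt

lemma HasCoeffs.deriv {f : ℂ → ℂ} {c : ℕ → ℂ} (h : HasCoeffs f c) :
    HasCoeffs (deriv f) (fun n => ((n : ℂ) + 1) * c (n + 1)) := by
  intro z hz
  have hsum := (h.hasFPowerSeriesOnBall.fderiv.hasSum (y := z)
    (by rwa [mem_eball, edist_zero_right, ← ofReal_norm, ENNReal.ofReal_lt_one])).mapL
    (ContinuousLinearMap.apply ℂ ℂ 1)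
  simpa [apply_eq_pow_smul_coeff, coeff_ofScalars, mul_comm, mul_left_comm] using hsum

noncomputable def derivCompCoeffs (a : ℂ) (M : ℕ) (c : ℕ → ℂ) : ℕ → ℂ :=
  extend (fun n => M * n) (fun n => ((n : ℂ) + 1) * c (n + 1) * a ^ n) 0

lemma hasCoeffs_deriv_comp {f : ℂ → ℂ} {c : ℕ → ℂ} {a : ℂ} (ha : ‖a‖ < 1) {M : ℕ} (hM : 0 < M)
    (h : HasCoeffs f c) :
    HasCoeffs (fun z => deriv f (a * z ^ M)) (derivCompCoeffs a M c) := by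
  intro z hz
  have hw : ‖a * z ^ M‖ < 1 := by
    rw [norm_mul, norm_pow]
    exact mul_lt_one_of_nonneg_of_lt_one_left (norm_nonneg a) ha
      (pow_le_one₀ (norm_nonneg z) hz.le)
  have hinj : Injective (M * ·) := mul_right_injective₀ hM.ne'
  refine (hinj.hasSum_iff fun k hk => by simp [derivCompCoeffs, extend_apply' _ _ _ hk]).1 ?_
  refine (h.deriv _ hw).congr_fun fun n => ?_
  simp only [comp_apply, derivCompCoeffs, hinj.extend_apply]
  ring

lemma S2sq_eq_add_tsum {c : ℕ → ℂ} (hc : Summable fun n : ℕ => (n : ℝ) ^ 2 * ‖c n‖ ^ 2) :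
    S2sq c = ‖c 0‖ ^ 2 + ∑' n : ℕ, ((n : ℝ) + 1) ^ 2 * ‖c (n + 1)‖ ^ 2 := by
  simp [S2sq, hc.tsum_eq_zero_add]

lemma S2sq_eq_tsum_max {c : ℕ → ℂ} (hc : Summable fun n : ℕ => (n : ℝ) ^ 2 * ‖c n‖ ^ 2) :
    S2sq c = ∑' n : ℕ, max 1 (n : ℝ) ^ 2 * ‖c n‖ ^ 2 := by
  have hmax : Summable fun n : ℕ => max 1 (n : ℝ) ^ 2 * ‖c n‖ ^ 2 := by
    refine (summable_nat_add_iff 1).1 (((summable_nat_add_iff 1).2 hc).congr fun n => ?_)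
    simp
  simp [S2sq, hc.tsum_eq_zero_add, hmax.tsum_eq_zero_add]

lemma S2sq_eq_tsum_of_shift {c d : ℕ → ℂ} {σ : ℕ → ℕ} (hσ : Injective σ)
    (hd : ∀ k ∉ Set.range σ, d k = 0) {w : ℕ → ℝ}
    (hw : ∀ n, max 1 (σ n : ℝ) ^ 2 * ‖d (σ n)‖ ^ 2 = w n * (((n : ℝ) + 1) ^ 2 * ‖c (n + 1)‖ ^ 2))
    (hwc : Summable fun n : ℕ => w n * (((n : ℝ) + 1) ^ 2 * ‖c (n + 1)‖ ^ 2)) :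
    S2sq d = ∑' n : ℕ, w n * (((n : ℝ) + 1) ^ 2 * ‖c (n + 1)‖ ^ 2) := by
  set g : ℕ → ℝ := fun k => max 1 (k : ℝ) ^ 2 * ‖d k‖ ^ 2
  have hg : ∀ k ∉ Set.range σ, g k = 0 := fun k hk => by simp [g, hd k hk]
  have hg_summable : Summable g := (hσ.summable_iff hg).1 (hwc.congr fun n => (hw n).symm)
  have hd_summable : Summable fun k : ℕ => (k : ℝ) ^ 2 * ‖d k‖ ^ 2 :=
    hg_summable.of_nonneg_of_le (fun k => by positivity)
      fun k => mul_le_mul_of_nonneg_right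
        (pow_le_pow_left₀ k.cast_nonneg (le_max_right _ _) 2) (by positivity)
  rw [S2sq_eq_tsum_max hd_summable, ← hσ.tsum_eq fun k hk => not_not.1 fun h => hk (hg k h)]
  exact tsum_congr hw

/-- `λₙ = ‖D_φ e_{n+1}‖`, the `S²` weight being `β(k) = max 1 k`. -/
noncomputable def derivCompWeight (a : ℂ) (M n : ℕ) : ℝ :=
  max 1 ((M * n : ℕ) : ℝ) * ‖a‖ ^ n

lemma derivCompWeight_nonneg (a : ℂ) (M n : ℕ) : 0 ≤ derivCompWeight a M n := by
  unfold derivCompWeight; positivity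

lemma S2sq_derivCompCoeffs {a : ℂ} {M : ℕ} (hM : 0 < M) {c : ℕ → ℂ}
    (hc : Summable fun n : ℕ =>
      derivCompWeight a M n ^ 2 * (((n : ℝ) + 1) ^ 2 * ‖c (n + 1)‖ ^ 2)) :
    S2sq (derivCompCoeffs a M c) =
      ∑' n : ℕ, derivCompWeight a M n ^ 2 * (((n : ℝ) + 1) ^ 2 * ‖c (n + 1)‖ ^ 2) := by
  have hinj : Injective (M * ·) := mul_right_injective₀ hM.ne'
  refine S2sq_eq_tsum_of_shift hinj (fun k hk => by simp [derivCompCoeffs, extend_apply' _ _ _ hk])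
    (fun n => ?_) hc
  have hn : ‖(n : ℂ) + 1‖ = (n : ℝ) + 1 := by exact_mod_cast Complex.norm_natCast (n + 1)
  simp only [derivCompCoeffs, hinj.extend_apply, derivCompWeight, norm_mul, norm_pow, hn]
  ring

lemma S2sq_derivCompCoeffs_le {a : ℂ} {M : ℕ} (hM : 0 < M) {N : ℝ}
    (hN : ∀ n, derivCompWeight a M n ≤ N) {c : ℕ → ℂ}
    (hc : Summable fun n : ℕ => (n : ℝ) ^ 2 * ‖c n‖ ^ 2) :
    S2sq (derivCompCoeffs a M c) ≤ N ^ 2 * S2sq c := by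
  set b : ℕ → ℝ := fun n => ((n : ℝ) + 1) ^ 2 * ‖c (n + 1)‖ ^ 2
  have hb : Summable b := by simpa using (summable_nat_add_iff 1).2 hc
  have hwb : ∀ n, derivCompWeight a M n ^ 2 * b n ≤ N ^ 2 * b n := fun n =>
    mul_le_mul_of_nonneg_right (pow_le_pow_left₀ (derivCompWeight_nonneg a M n) (hN n) 2)
      (by positivity)
  have hwb_summable : Summable fun n => derivCompWeight a M n ^ 2 * b n :=
    (hb.mul_left _).of_nonneg_of_le (fun n => by positivity) hwb
  calc S2sq (derivCompCoeffs a M c) = ∑' n, derivCompWeight a M n ^ 2 * b n :=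
        S2sq_derivCompCoeffs hM hwb_summable
    _ ≤ ∑' n, N ^ 2 * b n := hwb_summable.tsum_le_tsum hwb (hb.mul_left _)
    _ = N ^ 2 * ∑' n, b n := tsum_mul_left
    _ ≤ N ^ 2 * S2sq c := by
        rw [S2sq_eq_add_tsum hc]
        gcongr
        exact le_add_of_nonneg_left (by positivity)

lemma exists_S2sq_eq_derivCompWeight_sq {a : ℂ} (ha : ‖a‖ < 1) {M : ℕ} (hM : 0 < M) (j : ℕ) :
    ∃ (f : ℂ → ℂ) (c d : ℕ → ℂ), HasCoeffs f c ∧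
      Summable (fun n : ℕ => (n : ℝ) ^ 2 * ‖c n‖ ^ 2) ∧
      HasCoeffs (fun z => deriv f (a * z ^ M)) d ∧
      S2sq c = 1 ∧ S2sq d = derivCompWeight a M j ^ 2 := by
  set c : ℕ → ℂ := Pi.single (j + 1) ((j : ℂ) + 1)⁻¹
  have hj : ((j : ℝ) + 1) ^ 2 * ‖((j : ℂ) + 1)⁻¹‖ ^ 2 = 1 := by
    rw [norm_inv, show ‖(j : ℂ) + 1‖ = (j : ℝ) + 1 by exact_mod_cast Complex.norm_natCast (j + 1)]
    field_simp
  have hc : HasCoeffs (fun z => ((j : ℂ) + 1)⁻¹ * z ^ (j + 1)) c := fun z _ => by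
    simpa [c] using hasSum_single (f := fun n => c n * z ^ n) (j + 1) fun n hn => by simp [c, hn]
  have hsucc (n : ℕ) : ((n : ℝ) + 1) ^ 2 * ‖c (n + 1)‖ ^ 2 = (Pi.single j 1 : ℕ → ℝ) n := by
    rcases eq_or_ne n j with rfl | hn
    · simpa [c] using hj
    · simp [c, hn]
  have hc_summable : Summable fun n : ℕ => (n : ℝ) ^ 2 * ‖c n‖ ^ 2 :=
    (summable_nat_add_iff 1).1 <| (hasSum_pi_single j (1 : ℝ)).summable.congr fun n => by
      simpa using (hsucc n).symm
  have hd : HasSum (fun n => derivCompWeight a M n ^ 2 * (Pi.single j 1 : ℕ → ℝ) n)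
      (derivCompWeight a M j ^ 2) := by
    convert hasSum_single (f := fun n => derivCompWeight a M n ^ 2 *
      (Pi.single j 1 : ℕ → ℝ) n) j fun n hn => by simp [hn]
    simp
  refine ⟨_, c, _, hc, hc_summable, hasCoeffs_deriv_comp ha hM hc, ?_, ?_⟩
  · simp [c, S2sq_eq_add_tsum hc_summable, hsucc]
  · rw [S2sq_derivCompCoeffs hM (by simpa [hsucc] using hd.summable)]
    simpa [hsucc] using hd.tsum_eq

lemma natCast_mul_pow_le_of_peak {r : ℝ} (hr : 0 ≤ r) {m : ℕ} (hm : (m : ℝ) * (1 - r) ≤ 1)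
    (hm' : 1 < ((m : ℝ) + 1) * (1 - r)) (n : ℕ) : (n : ℝ) * r ^ n ≤ m * r ^ m := by
  have hr1 : 0 < 1 - r := by nlinarith
  set g : ℕ → ℝ := fun j => j * r ^ j
  have hstep : ∀ j : ℕ, g (j + 1) = g j + r ^ j * (1 - ((j : ℝ) + 1) * (1 - r)) := fun j => by
    simp only [g, Nat.cast_add_one, pow_succ]
    ring
  have hmono : MonotoneOn g (Set.Iic m) :=
    monotoneOn_of_le_add_one Set.ordConnected_Iic fun j _ _ hj => by
      have hj : ((j : ℝ) + 1) * (1 - r) ≤ 1 :=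
        le_trans (by gcongr; exact_mod_cast hj) hm
      rw [hstep]
      exact le_add_of_nonneg_right (mul_nonneg (pow_nonneg hr j) (sub_nonneg.2 hj))
  have hanti : AntitoneOn g (Set.Ici m) :=
    antitoneOn_of_add_one_le Set.ordConnected_Ici fun j _ hj _ => by
      have hj : 1 ≤ ((j : ℝ) + 1) * (1 - r) :=
        hm'.le.trans (by gcongr; exact_mod_cast hj)
      rw [hstep]
      exact add_le_of_nonpos_right
        (mul_nonpos_of_nonneg_of_nonpos (pow_nonneg hr j) (by linarith))
  rcases le_total n m with h | h
  · exact hmono h Set.self_mem_Iic h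
  · exact hanti Set.self_mem_Ici h h

lemma floor_two_sub_div_one_sub_bounds {r : ℝ} (hr0 : 0 ≤ r) (hr : r < 1) {ν : ℕ}
    (hν : ν = ⌊(2 - r) / (1 - r)⌋₊) :
    2 ≤ ν ∧ ((ν : ℝ) - 1) * (1 - r) ≤ 1 ∧ 1 < ν * (1 - r) := by
  have hr1 : 0 < 1 - r := by linarith
  have hx : (2 : ℝ) ≤ (2 - r) / (1 - r) := by rw [le_div_iff₀ hr1]; linarith
  have hle := (le_div_iff₀ hr1).1 (hν ▸ Nat.floor_le (by positivity))
  have hlt := (div_lt_iff₀ hr1).1 (hν ▸ Nat.lt_floor_add_one ((2 - r) / (1 - r)))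
  exact ⟨hν ▸ Nat.le_floor (by exact_mod_cast hx), by linarith, by linarith⟩

lemma derivCompWeight_le {a : ℂ} {M m : ℕ} (hm : (m : ℝ) * (1 - ‖a‖) ≤ 1)
    (hm' : 1 < ((m : ℝ) + 1) * (1 - ‖a‖)) (n : ℕ) :
    derivCompWeight a M n ≤ max 1 (M * m * ‖a‖ ^ m) := by
  have ha : ‖a‖ ≤ 1 := by nlinarith
  rw [derivCompWeight, max_mul_of_nonneg _ _ (by positivity), one_mul]
  refine max_le_max (pow_le_one₀ (norm_nonneg a) ha) ?_
  calc ((M * n : ℕ) : ℝ) * ‖a‖ ^ n = M * (n * ‖a‖ ^ n) := by push_cast; ring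
    _ ≤ M * (m * ‖a‖ ^ m) := by
        gcongr ?_ * ?_
        exact natCast_mul_pow_le_of_peak (norm_nonneg a) hm hm' n
    _ = M * m * ‖a‖ ^ m := by ring

theorem stmt9_general (a : ℂ) (ha : ‖a‖ < 1) (M : ℕ) (hM : 1 ≤ M)
    (ν : ℕ) (hν : ν = ⌊(2 - ‖a‖) / (1 - ‖a‖)⌋₊)
    (N : ℝ) (hN : N = max 1 ((M : ℝ) * ((ν : ℝ) - 1) * ‖a‖ ^ (ν - 1))) :
    (∀ (f : ℂ → ℂ) (c d : ℕ → ℂ), HasCoeffs f c →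
        Summable (fun n : ℕ => (n : ℝ) ^ 2 * ‖c n‖ ^ 2) →
        HasCoeffs (fun z => deriv f (a * z ^ M)) d →
        S2sq d ≤ N ^ 2 * S2sq c) ∧
    (∃ (f : ℂ → ℂ) (c d : ℕ → ℂ), HasCoeffs f c ∧
        Summable (fun n : ℕ => (n : ℝ) ^ 2 * ‖c n‖ ^ 2) ∧
        HasCoeffs (fun z => deriv f (a * z ^ M)) d ∧
        S2sq c = 1 ∧ S2sq d = N ^ 2) := by
  obtain ⟨hν2, hpeak, hpeak'⟩ := floor_two_sub_div_one_sub_bounds (norm_nonneg a) ha hν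
  have hνm : (ν : ℝ) - 1 = ((ν - 1 : ℕ) : ℝ) := by rw [Nat.cast_sub (by omega), Nat.cast_one]
  rw [hνm] at hN hpeak
  rw [show (ν : ℝ) = ((ν - 1 : ℕ) : ℝ) + 1 by linarith] at hpeak'
  have hNw : N = max (derivCompWeight a M 0) (derivCompWeight a M (ν - 1)) := by
    have hMm : (1 : ℝ) ≤ ((M * (ν - 1) : ℕ) : ℝ) := by exact_mod_cast Nat.mul_pos hM (by omega)
    rw [hN, derivCompWeight, derivCompWeight, max_eq_right hMm]
    push_cast
    simp
  refine ⟨fun f c d hc hs hd => ?_, ?_⟩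
  · rw [hd.unique (hasCoeffs_deriv_comp ha hM hc)]
    exact S2sq_derivCompCoeffs_le hM (fun n => hN ▸ derivCompWeight_le hpeak hpeak' n) hs
  · rcases max_choice (derivCompWeight a M 0) (derivCompWeight a M (ν - 1)) with h | h <;>
      rw [hNw, h] <;> exact exists_S2sq_eq_derivCompWeight_sq ha hM _

/-- For `φ(z) = a z^M` with `0 < |a| < 1` and `M ≥ 1`, the norm of `D_φ f = f' ∘ φ` on
`S²` is `max {1, M(ν-1)|a|^{ν-1}}` with `ν = ⌊(2-|a|)/(1-|a|)⌋`: this constant bounds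
the operator and is attained. -/
theorem stmt9 (a : ℂ) (ha0 : a ≠ 0) (ha : ‖a‖ < 1) (M : ℕ) (hM : 1 ≤ M)
    (ν : ℕ) (hν : ν = ⌊(2 - ‖a‖) / (1 - ‖a‖)⌋₊)
    (N : ℝ) (hN : N = max 1 ((M : ℝ) * ((ν : ℝ) - 1) * ‖a‖ ^ (ν - 1))) :
    (∀ (f : ℂ → ℂ) (c d : ℕ → ℂ), HasCoeffs f c →
        Summable (fun n : ℕ => (n : ℝ) ^ 2 * ‖c n‖ ^ 2) →
        HasCoeffs (fun z => deriv f (a * z ^ M)) d →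
        S2sq d ≤ N ^ 2 * S2sq c) ∧
    (∃ (f : ℂ → ℂ) (c d : ℕ → ℂ), HasCoeffs f c ∧
        Summable (fun n : ℕ => (n : ℝ) ^ 2 * ‖c n‖ ^ 2) ∧
        HasCoeffs (fun z => deriv f (a * z ^ M)) d ∧
        S2sq c = 1 ∧ S2sq d = N ^ 2) :=
  stmt9_general a ha M hM ν hν N hN
end

section
/- Let \varphi(z) = az + b with 0 < |a| < 1 - |b| (so \|\varphi\|_\infty < 1), and suppose \lambda \neq 0 and f is analytic on the unit disk with f'(az + b) = \lambda f(z) for all z in the disk. Then f = 0; i.e., D_\varphi has no nonzero eigenvalues, and its spectrum on S^p is {0}. -/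
/-!
The fixed point `p = b / (1 - a)` of `φ z = a z + b` lies in the disk. Differentiating
`f' ∘ φ = λ f` repeatedly gives `aⁿ f⁽ⁿ⁺¹⁾(φ z) = λ f⁽ⁿ⁾(z)`, hence `aⁿ f⁽ⁿ⁺¹⁾(p) = λ f⁽ⁿ⁾(p)`.
If some `f⁽ᵐ⁾(p)` were nonzero, so would be all later ones, and the ratio of consecutive terms of
the Taylor series at `p` with radius `ρ`, namely `λ ρ / ((n + 1) aⁿ)`, would tend to infinity,
contradicting its convergence. So `f` vanishes to infinite order at `p`, and on the whole disk by
the identity theorem.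
-/

open Filter Metric Set Topology

section AffineDisk

variable {𝕜 : Type*} [NormedField 𝕜]

theorem mapsTo_affine_ball_zero_one {a b : 𝕜} (hab : ‖a‖ < 1 - ‖b‖) :
    MapsTo (fun z ↦ a * z + b) (ball 0 1) (ball 0 1) := by
  intro z hz
  rw [mem_ball_zero_iff] at hz ⊢
  calc ‖a * z + b‖ ≤ ‖a‖ * ‖z‖ + ‖b‖ := by simpa only [norm_mul] using norm_add_le (a * z) b
    _ < 1 := by nlinarith [norm_nonneg a, norm_nonneg z]

theorem exists_mem_ball_zero_one_affine_eq_self {a b : 𝕜} (hab : ‖a‖ < 1 - ‖b‖) :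
    ∃ p ∈ ball (0 : 𝕜) 1, a * p + b = p := by
  have hnorm : 1 - ‖a‖ ≤ ‖1 - a‖ := by simpa using norm_sub_norm_le (1 : 𝕜) a
  have hpos : 0 < ‖1 - a‖ := by linarith [norm_nonneg b]
  refine ⟨b / (1 - a), ?_, ?_⟩
  · rw [mem_ball_zero_iff, norm_div, div_lt_one hpos]
    linarith
  · field_simp [norm_pos_iff.mp hpos]
    ring

end AffineDisk

section Analytic

variable {𝕜 E : Type*} [NontriviallyNormedField 𝕜] [NormedAddCommGroup E] [NormedSpace 𝕜 E]
  [CompleteSpace E] {f : 𝕜 → E} {U : Set 𝕜}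

theorem AnalyticOnNhd.pow_smul_iteratedDeriv_succ_affine (hf : AnalyticOnNhd 𝕜 f U)
    (hU : IsOpen U) {a b lam : 𝕜} (hmaps : MapsTo (fun z ↦ a * z + b) U U)
    (heig : ∀ z ∈ U, deriv f (a * z + b) = lam • f z) (n : ℕ) :
    ∀ z ∈ U, a ^ n • iteratedDeriv (n + 1) f (a * z + b) = lam • iteratedDeriv n f z := by
  have hD : ∀ k, ∀ z ∈ U, HasDerivAt (iteratedDeriv k f) (iteratedDeriv (k + 1) f z) z := by
    intro k z hz
    rw [iteratedDeriv_succ, iteratedDeriv_eq_iterate]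
    exact ((hf.iterated_deriv k) z hz).differentiableAt.hasDerivAt
  induction n with
  | zero => simpa using heig
  | succ n ih =>
    intro z hz
    have hL : HasDerivAt (fun w ↦ a ^ n • iteratedDeriv (n + 1) f (a * w + b))
        (a ^ n • a • iteratedDeriv (n + 1 + 1) f (a * z + b)) z := by
      have haff : HasDerivAt (fun w ↦ a * w + b) a z := by
        simpa using ((hasDerivAt_id z).const_mul a).add_const b
      exact ((hD (n + 1) _ (hmaps hz)).scomp z haff).const_smul (a ^ n)
    have hR : HasDerivAt (fun w ↦ lam • iteratedDeriv n f w)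
        (lam • iteratedDeriv (n + 1) f z) z := (hD n z hz).const_smul lam
    have heq : (fun w ↦ a ^ n • iteratedDeriv (n + 1) f (a * w + b))
        =ᶠ[𝓝 z] fun w ↦ lam • iteratedDeriv n f w :=
      eventually_of_mem (hU.mem_nhds hz) ih
    rw [pow_succ', mul_smul, smul_comm a]
    exact (hR.unique (hL.congr_of_eventuallyEq heq.symm)).symm

theorem AnalyticOnNhd.eqOn_zero_of_preconnected_of_iteratedDeriv_eq_zero [CharZero 𝕜] {z₀ : 𝕜}
    (hf : AnalyticOnNhd 𝕜 f U) (hU : IsPreconnected U) (h₀ : z₀ ∈ U)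
    (hderiv : ∀ n, iteratedDeriv n f z₀ = 0) : EqOn f 0 U := by
  have htop : analyticOrderAt f z₀ = ⊤ := ENat.eq_top_iff_forall_ge.mpr fun n ↦
    (natCast_le_analyticOrderAt_iff_iteratedDeriv_eq_zero (hf z₀ h₀)).mpr fun i _ ↦ hderiv i
  exact hf.eqOn_zero_of_preconnected_of_eventuallyEq_zero hU h₀ (analyticOrderAt_eq_top.mp htop)

end Analytic

namespace Complex

variable {E : Type*} [NormedAddCommGroup E] [NormedSpace ℂ E] [CompleteSpace E] {f : ℂ → E}

theorem iteratedDeriv_eq_zero_of_pow_smul_iteratedDeriv_succ {c : ℂ} {r : ℝ} (hr : 0 < r)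
    (hf : DifferentiableOn ℂ f (ball c r)) {a lam : ℂ} (ha : ‖a‖ < 1) (hlam : lam ≠ 0)
    (hrel : ∀ n, a ^ n • iteratedDeriv (n + 1) f c = lam • iteratedDeriv n f c) (m : ℕ) :
    iteratedDeriv m f c = 0 := by
  by_contra hm
  have hne : ∀ n ≥ m, iteratedDeriv n f c ≠ 0 := by
    refine Nat.le_induction hm fun n _ ih h ↦ ?_
    have := hrel n
    rw [h, smul_zero] at this
    exact smul_ne_zero hlam ih this.symm
  obtain ⟨ρ, hρ, hρr⟩ : ∃ ρ, 0 < ρ ∧ ρ < r := ⟨r / 2, half_pos hr, half_lt_self hr⟩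
  set t : ℕ → E := fun n ↦ (n.factorial : ℂ)⁻¹ • (c + ρ - c) ^ n • iteratedDeriv n f c
  have hsum : Summable t :=
    (hasSum_taylorSeries_on_ball hf (by simpa [abs_of_pos hρ] using hρr)).summable
  have hnorm : ∀ n, ‖t n‖ = ρ ^ n / n.factorial * ‖iteratedDeriv n f c‖ := fun n ↦ by
    simp only [t, norm_smul, norm_inv, norm_pow, norm_natCast, add_sub_cancel_left, norm_real,
      Real.norm_of_nonneg hρ.le]
    ring
  have hratio : ∀ n, ((n + 1) * ‖a‖ ^ n) * ‖t (n + 1)‖ = (‖lam‖ * ρ) * ‖t n‖ := fun n ↦ by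
    have := congrArg norm (hrel n)
    rw [norm_smul, norm_smul, norm_pow] at this
    rw [hnorm, hnorm, Nat.factorial_succ, pow_succ]
    push_cast
    field_simp
    exact this
  have hsmall : Tendsto (fun n : ℕ ↦ (n + 1) * ‖a‖ ^ n) atTop (𝓝 0) := by
    simpa [add_mul] using (tendsto_self_mul_const_pow_of_lt_one (norm_nonneg a) ha).add
      (tendsto_pow_atTop_nhds_zero_of_lt_one (norm_nonneg a) ha)
  refine not_summable_of_ratio_norm_eventually_ge one_lt_two ?_ ?_ hsum
  · refine (eventually_atTop.mpr ⟨m, fun n hn ↦ ?_⟩).frequently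
    rw [hnorm]
    have := hne n hn
    positivity
  · have hc : 0 < ‖lam‖ * ρ / 2 := by positivity
    filter_upwards [hsmall.eventually_lt_const hc] with n hn
    have := hratio n
    nlinarith [norm_nonneg (t n), norm_nonneg (t (n + 1))]

end Complex

theorem stmt18_general (a b : ℂ) (hab : ‖a‖ < 1 - ‖b‖)
    (lam : ℂ) (hlam : lam ≠ 0) (f : ℂ → ℂ)
    (hf : DifferentiableOn ℂ f (ball 0 1))
    (heig : ∀ z ∈ ball (0 : ℂ) 1, deriv f (a * z + b) = lam * f z) :
    ∀ z ∈ ball (0 : ℂ) 1, f z = 0 := by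
  have hA : AnalyticOnNhd ℂ f (ball 0 1) := hf.analyticOnNhd isOpen_ball
  obtain ⟨p, hp, hp_fix⟩ := exists_mem_ball_zero_one_affine_eq_self hab
  have hrel (n : ℕ) : a ^ n • iteratedDeriv (n + 1) f p = lam • iteratedDeriv n f p := by
    simpa only [hp_fix] using hA.pow_smul_iteratedDeriv_succ_affine isOpen_ball
      (mapsTo_affine_ball_zero_one hab) heig n p hp
  obtain ⟨r, hr, hball⟩ := isOpen_ball.mem_nhds hp |> Metric.mem_nhds_iff.mp
  have hderiv := Complex.iteratedDeriv_eq_zero_of_pow_smul_iteratedDeriv_succ hr (hf.mono hball)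
    (by linarith [norm_nonneg b]) hlam hrel
  exact fun z hz ↦ hA.eqOn_zero_of_preconnected_of_iteratedDeriv_eq_zero
    (convex_ball 0 1).isPreconnected hp hderiv hz

/-- For `φ(z) = az + b` with `0 < |a| < 1 - |b|`: if `λ ≠ 0` and `f` is analytic on the
unit disk with `f'(az+b) = λ f(z)` on the disk, then `f = 0`; i.e. `D_φ` has no nonzero
eigenvalues (so its spectrum on `S^p` is `{0}`). -/
theorem stmt18 (a b : ℂ) (ha0 : 0 < ‖a‖) (hab : ‖a‖ < 1 - ‖b‖)
    (lam : ℂ) (hlam : lam ≠ 0) (f : ℂ → ℂ)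
    (hf : DifferentiableOn ℂ f (ball 0 1))
    (heig : ∀ z ∈ ball (0 : ℂ) 1, deriv f (a * z + b) = lam * f z) :
    ∀ z ∈ ball (0 : ℂ) 1, f z = 0 :=
  stmt18_general a b hab lam hlam f hf heig
end
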